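/- arXiv:1201.6247 — 6 statements merged into one kernel-verified Lean document; each statement's English description precedes it below -/
import Mathlib

section
/- Let n ≥ 2, L ≥ 1, r_0 > 0, and u = (u_1,…,u_n) ∈ (Z^d)^n. If for every nonempty proper subset J of {1,…,n} one has min_{i∈J, j∉J} ‖u_i − u_j‖_∞ < 2L + r_0, then dist_∞(u, D) < (n−1)(2L + r_0), where D = {(x,…,x) : x ∈ Z^d} is the diagonal. Equivalently: every partially interactive cube (one with dist(u, D) ≥ (n−1)(2L+r_0)) is decomposable. -/
/-!
Grow a set of indices from a base point `i₀`: if the current set `J` is a nonempty proper subset,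
the hypothesis gives an `i ∈ J` and a `j ∉ J` at distance `< R`, and adding `j` raises the bound
on the distance to `u i₀` by at most `R`. After `n - 1` steps every point lies within
`(n - 1) R` of `u i₀`, which is then a centre for the diagonal.
-/

open Finset

section CutConnected

variable {ι α : Type*} [Fintype ι] [PseudoMetricSpace α]

def CutConnected (u : ι → α) (R : ℝ) : Prop :=
  ∀ J : Finset ι, J.Nonempty → J ≠ univ → ∃ i ∈ J, ∃ j ∉ J, dist (u i) (u j) < R

variable {u : ι → α} {R : ℝ}

theorem CutConnected.pos (hu : CutConnected u R) (hcard : 1 < Fintype.card ι) : 0 < R := by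
  obtain ⟨i₀⟩ : Nonempty ι := Fintype.card_pos_iff.mp (by omega)
  have hproper : ({i₀} : Finset ι) ≠ univ := by
    intro h
    have := congrArg card h
    rw [card_singleton, card_univ] at this
    omega
  obtain ⟨i, -, j, -, hij⟩ := hu {i₀} (singleton_nonempty i₀) hproper
  exact dist_nonneg.trans_lt hij

theorem CutConnected.exists_card_eq_dist_lt (hu : CutConnected u R) (i₀ : ι) {k : ℕ}
    (hk : 1 ≤ k) (hkn : k ≤ Fintype.card ι) :
    ∃ J : Finset ι, #J = k ∧ ∀ j ∈ J, j ≠ i₀ → dist (u j) (u i₀) < (k - 1) * R := by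
  induction k, hk using Nat.le_induction with
  | base => exact ⟨{i₀}, card_singleton i₀, fun j hj hne => absurd (mem_singleton.mp hj) hne⟩
  | succ k hk ih =>
    obtain ⟨J, hJcard, hJ⟩ := ih (by omega)
    have hR : 0 < R := hu.pos (by omega)
    have hproper : J ≠ univ := by
      rintro rfl
      rw [card_univ] at hJcard
      omega
    obtain ⟨i, hi, j, hj, hij⟩ := hu J (card_pos.mp (by omega)) hproper
    have hi₀ : dist (u i) (u i₀) ≤ (k - 1) * R := by
      by_cases hii₀ : i = i₀
      · subst hii₀
        rw [dist_self]
        exact mul_nonneg (sub_nonneg.mpr (by exact_mod_cast hk)) hR.le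
      · exact (hJ i hi hii₀).le
    refine ⟨cons j J hj, by rw [card_cons, hJcard], fun m hm hmi₀ => ?_⟩
    push_cast
    rcases mem_cons.mp hm with rfl | hmJ
    · calc dist (u m) (u i₀) ≤ dist (u m) (u i) + dist (u i) (u i₀) := dist_triangle _ _ _
        _ < R + (k - 1) * R := by rw [dist_comm]; linarith
        _ = (k + 1 - 1) * R := by ring
    · linarith [hJ m hmJ hmi₀]

theorem CutConnected.dist_lt (hu : CutConnected u R) (hcard : 1 < Fintype.card ι) (i₀ j : ι) :
    dist (u j) (u i₀) < (Fintype.card ι - 1) * R := by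
  obtain ⟨J, hJcard, hJ⟩ := hu.exists_card_eq_dist_lt i₀ (by omega) le_rfl
  by_cases hj : j = i₀
  · subst hj
    rw [dist_self]
    have : (1 : ℝ) < Fintype.card ι := by exact_mod_cast hcard
    exact mul_pos (by linarith) (hu.pos hcard)
  · exact hJ j (eq_univ_of_card J hJcard ▸ mem_univ j) hj

end CutConnected

theorem stmt2_general (d n : ℕ) (hn : 2 ≤ n) (L : ℕ) (r0 : ℝ)
    (u : Fin n → (Fin d → ℤ))
    (h : ∀ J : Finset (Fin n), J.Nonempty → J ≠ Finset.univ →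
      ∃ i ∈ J, ∃ j ∉ J, ‖u i - u j‖ < 2 * (L : ℝ) + r0) :
    ∃ x : Fin d → ℤ, ∀ j : Fin n, ‖u j - x‖ < ((n : ℝ) - 1) * (2 * L + r0) := by
  have hu : CutConnected u (2 * (L : ℝ) + r0) := by
    simpa only [CutConnected, dist_eq_norm] using h
  have hcard : 1 < Fintype.card (Fin n) := by rw [Fintype.card_fin]; omega
  refine ⟨u ⟨0, by omega⟩, fun j => ?_⟩
  simpa only [dist_eq_norm, Fintype.card_fin] using hu.dist_lt hcard ⟨0, by omega⟩ j

/-- If for every nonempty proper subset `J` of `{1,…,n}` one has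
`min_{i∈J, j∉J} ‖u_i − u_j‖_∞ < 2L + r₀`, then `dist_∞(u, D) < (n−1)(2L + r₀)`,
where `D` is the diagonal `{(x,…,x) : x ∈ ℤ^d}`; i.e. there is `x ∈ ℤ^d` with
`‖u_j − x‖_∞ < (n−1)(2L+r₀)` for all `j`.  (Equivalently: every partially
interactive cube is decomposable.)  Here `Fin d → ℤ` carries the sup norm. -/
theorem stmt2 (d n : ℕ) (hn : 2 ≤ n) (L : ℕ) (hL : 1 ≤ L) (r0 : ℝ) (hr0 : 0 < r0)
    (u : Fin n → (Fin d → ℤ))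
    (h : ∀ J : Finset (Fin n), J.Nonempty → J ≠ Finset.univ →
      ∃ i ∈ J, ∃ j ∉ J, ‖u i - u j‖ < 2 * (L : ℝ) + r0) :
    ∃ x : Fin d → ℤ, ∀ j : Fin n, ‖u j - x‖ < ((n : ℝ) - 1) * (2 * L + r0) :=
  stmt2_general d n hn L r0 u h
end

section
/- Let n ≥ 1, L ≥ 1, and x, y ∈ (Z^d)^n. For x, let x^{(1)},…,x^{(K)} (K ≤ n^n) be all points whose coordinates are chosen among {x_1,…,x_n}. If y ∉ ⋃_j Λ_{2nL}(x^{(j)}) (sup-norm cubes of radius 2nL in R^{nd}), then the cubes Λ_L(y) and Λ_L(x) are pre-separable. -/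
/-- The projection `Π_J Λ_L(u) = ⋃_{j∈J} Λ_L(u_j) ⊂ ℝ^d`, where `Λ_L(v)` is the
open sup-norm cube of radius `L` around `v` (`Fin d → ℝ` carries the sup norm). -/
def piProj (d n : ℕ) (L : ℝ) (u : Fin n → Fin d → ℤ) (J : Finset (Fin n)) :
    Set (Fin d → ℝ) :=
  ⋃ j ∈ J, Metric.ball (fun i => ((u j i : ℝ))) L

/-- Cubes `Λ_L(u)` and `Λ_L(v)` are pre-separable if for some nonempty
`J ⊆ {1,…,n}` and one of the two orderings,
`Π_J Λ_L(u) ∩ (Π_{J^c} Λ_L(u) ∪ Π Λ_L(v)) = ∅`. -/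
def PreSeparable (d n : ℕ) (L : ℝ) (u v : Fin n → Fin d → ℤ) : Prop :=
  ∃ J : Finset (Fin n), J.Nonempty ∧
    (piProj d n L u J ∩ (piProj d n L u Jᶜ ∪ piProj d n L v Finset.univ) = ∅ ∨
     piProj d n L v J ∩ (piProj d n L v Jᶜ ∪ piProj d n L u Finset.univ) = ∅)

/-!
Measure each `y_k` by its distance `D k` to the anchor set `{x_1, …, x_n}`. By hypothesis some
`D k₀ ≥ 2nL` (otherwise the nearest anchors give an `x^{(j)}` within `2nL` of `y`), so the `n`
values `D k` miss one of the `n` windows `[2Lj, 2L(j+1))`, `j < n`. The indices beyond the gap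
form `J`: since `D` is 1-Lipschitz, each of their centres lies at distance `≥ 2L` from every
centre below the gap and from every anchor, so the corresponding `L`-cubes are disjoint.
-/

open Finset Metric

lemma exists_Ico_gap {ι : Type*} [Fintype ι] (f : ι → ℝ) {a : ℝ} (ha : 0 < a) {k₀ : ι}
    (hk₀ : Fintype.card ι * a ≤ f k₀) :
    ∃ c, 0 ≤ c ∧ c + a ≤ f k₀ ∧ ∀ k, f k ∉ Set.Ico c (c + a) := by
  classical
  set near := univ.filter fun k => f k < Fintype.card ι * a
  have hnear : #near < Fintype.card ι :=
    card_lt_univ_of_notMem (by simpa [near] using hk₀)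
  obtain ⟨j, hj, hgap⟩ := exists_mem_notMem_of_card_lt_card
    (s := near.image fun k => ⌊f k / a⌋₊) (t := range (Fintype.card ι))
    (by simpa using card_image_le.trans_lt hnear)
  have hj : ((j + 1 : ℕ) : ℝ) ≤ Fintype.card ι := by exact_mod_cast mem_range.1 hj
  push_cast at hj
  have hc : 0 ≤ a * j := mul_nonneg ha.le j.cast_nonneg
  refine ⟨a * j, hc, by nlinarith, ?_⟩
  rintro k ⟨hlo, hhi⟩
  refine hgap (mem_image.2 ⟨k, mem_filter.2 ⟨mem_univ k, by nlinarith⟩, ?_⟩)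
  rw [Nat.floor_eq_iff (div_nonneg (hc.trans hlo) ha.le), le_div_iff₀ ha, div_lt_iff₀ ha]
  constructor <;> linarith

lemma dist_intCast_pi {d : ℕ} (u v : Fin d → ℤ) :
    dist (fun i => (u i : ℝ)) (fun i => (v i : ℝ)) = dist u v :=
  (Isometry.piMap (fun _ => ((↑) : ℤ → ℝ)) fun _ => Real.isometry_intCast).dist_eq u v

lemma disjoint_piProj {d n : ℕ} {L : ℝ} {u v : Fin n → Fin d → ℤ} {J K : Finset (Fin n)}
    (hsep : ∀ j ∈ J, ∀ k ∈ K, 2 * L ≤ dist (u j) (v k)) :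
    Disjoint (piProj d n L u J) (piProj d n L v K) := by
  simp only [piProj, Set.disjoint_iUnion_left, Set.disjoint_iUnion_right]
  intro k hk j hj
  apply ball_disjoint_ball
  rw [dist_intCast_pi]
  linarith [hsep j hj k hk]

/-- If `y` lies outside all the cubes `Λ_{2nL}(x^{(j)})` in `ℝ^{nd}`
(sup norm), where the `x^{(j)}` range over all points whose coordinates are chosen
among `{x_1,…,x_n}`, then `Λ_L(y)` and `Λ_L(x)` are pre-separable. -/
theorem stmt3 (d n : ℕ) (hn : 1 ≤ n) (L : ℕ) (hL : 1 ≤ L)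
    (x y : Fin n → Fin d → ℤ)
    (h : ∀ v : Fin n → Fin d → ℤ, (∀ k : Fin n, ∃ m : Fin n, v k = x m) →
      2 * (n : ℝ) * L ≤ ‖y - v‖) :
    PreSeparable d n L x y := by
  have : NeZero n := ⟨by omega⟩
  have h2L : (0 : ℝ) < 2 * L := by positivity
  set D := fun k => infDist (y k) (Set.range x)
  obtain ⟨k₀, hk₀⟩ : ∃ k₀, 2 * (n : ℝ) * L ≤ D k₀ := by
    by_contra! hnear
    choose v hv hyv using fun k => (infDist_lt_iff (Set.range_nonempty x)).1 (hnear k)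
    have hyv : dist y v < 2 * n * L := (dist_pi_lt_iff (by positivity)).2 hyv
    exact (h v fun k => (hv k).imp fun m hm => hm.symm).not_gt (dist_eq_norm y v ▸ hyv)
  obtain ⟨c, hc, hck₀, hgap⟩ :=
    exists_Ico_gap D h2L (k₀ := k₀) (by rw [Fintype.card_fin]; linarith)
  classical
  refine ⟨univ.filter fun k => c + 2 * L ≤ D k, ⟨k₀, by simpa using hck₀⟩, Or.inr ?_⟩
  rw [← Set.disjoint_iff_inter_eq_empty]
  refine Disjoint.union_right (disjoint_piProj fun k hk l hl => ?_)
    (disjoint_piProj fun k hk m _ => ?_)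
  · simp only [compl_filter, mem_filter, mem_univ, true_and, not_le] at hk hl
    have hl : D l < c := not_le.1 fun hcl => hgap l ⟨hcl, hl⟩
    linarith [infDist_le_infDist_add_dist (x := y k) (y := y l) (s := Set.range x)]
  · simp only [mem_filter, mem_univ, true_and] at hk
    linarith [infDist_le_dist_of_mem (x := y k) (Set.mem_range_self (f := x) m)]
end

section
/- Let n ≥ 2, L ≥ 1, r_0 > 0. If two cubes Λ_L(u), Λ_L(v) ⊂ R^{nd} are both fully interactive (i.e., dist_∞(u, D) < (n−1)(2L+r_0) and dist_∞(v, D) < (n−1)(2L+r_0), D the diagonal) and ‖u − v‖_∞ ≥ 4(n−1)(2L+r_0)+2L, then Π_j Λ_L(u) ∩ Π_k Λ_L(v) = ∅ for all j, k ∈ {1,…,n}; in particular Π Λ_L(u) ∩ Π Λ_L(v) = ∅. -/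
/-!
If every `u j` lies within `M` of a common point `x` and every `v k` within `M` of `y`, then by
the triangle inequality all the distances `‖u m - v m‖` and `‖u j - v k‖` differ from `‖x - y‖`
by less than `2M`. Hence the cross distances `‖u j - v k‖` exceed `‖u - v‖ - 4M ≥ 2L`, and the
projected cubes of radius `L` around `u j` and `v k` are disjoint.
-/

open Metric

lemma norm_sub_lt_norm_apply_sub_add {ι E : Type*} [Fintype ι] [SeminormedAddCommGroup E]
    {u v : ι → E} {x y : E} {M : ℝ} (hu : ∀ j, ‖u j - x‖ < M) (hv : ∀ k, ‖v k - y‖ < M)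
    (j k : ι) : ‖u - v‖ < ‖u j - v k‖ + 4 * M := by
  have : Nonempty ι := ⟨j⟩
  have hdiag : ‖u - v‖ ≤ ‖x - y‖ + 2 * M := by
    refine (pi_norm_le_iff_of_nonempty _).2 fun m => ?_
    calc ‖u m - v m‖ ≤ ‖u m - x‖ + ‖x - y‖ + ‖y - v m‖ := by
          simpa only [dist_eq_norm] using dist_triangle4 (u m) x y (v m)
      _ ≤ ‖x - y‖ + 2 * M := by linarith [hu m, norm_sub_rev y (v m), hv m]
  have hcross : ‖x - y‖ ≤ ‖x - u j‖ + ‖u j - v k‖ + ‖v k - y‖ := by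
    simpa only [dist_eq_norm] using dist_triangle4 x (u j) (v k) y
  linarith [hu j, norm_sub_rev x (u j), hv k]

lemma dist_intCast_pi_s5 {ι : Type*} [Fintype ι] (a b : ι → ℤ) :
    dist (fun i => (a i : ℝ)) (fun i => (b i : ℝ)) = ‖a - b‖ := by
  rw [← dist_eq_norm]
  exact (Isometry.piMap (fun _ => ((↑) : ℤ → ℝ)) fun _ => Real.isometry_intCast).dist_eq a b

theorem stmt5_general (d n : ℕ) (L : ℕ) (r0 : ℝ)
    (u v : Fin n → Fin d → ℤ)
    (hu : ∃ x : Fin d → ℤ, ∀ j : Fin n, ‖u j - x‖ < ((n : ℝ) - 1) * (2 * L + r0))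
    (hv : ∃ x : Fin d → ℤ, ∀ j : Fin n, ‖v j - x‖ < ((n : ℝ) - 1) * (2 * L + r0))
    (hsep : 4 * ((n : ℝ) - 1) * (2 * L + r0) + 2 * L ≤ ‖u - v‖) :
    (∀ j k : Fin n,
      Metric.ball (fun i => ((u j i : ℝ))) (L : ℝ) ∩
        Metric.ball (fun i => ((v k i : ℝ))) (L : ℝ) = ∅) ∧
    (⋃ j, Metric.ball (fun i => ((u j i : ℝ))) (L : ℝ)) ∩
      (⋃ k, Metric.ball (fun i => ((v k i : ℝ))) (L : ℝ)) = ∅ := by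
  obtain ⟨x, hx⟩ := hu
  obtain ⟨y, hy⟩ := hv
  have hdisj : ∀ j k : Fin n, Disjoint (ball (fun i => ((u j i : ℝ))) (L : ℝ))
      (ball (fun i => ((v k i : ℝ))) (L : ℝ)) := fun j k =>
    ball_disjoint_ball <| by
      rw [dist_intCast_pi_s5]
      linarith [norm_sub_lt_norm_apply_sub_add hx hy j k]
  refine ⟨fun j k => Set.disjoint_iff_inter_eq_empty.1 (hdisj j k), ?_⟩
  exact Set.disjoint_iff_inter_eq_empty.1 <|
    Set.disjoint_iUnion_left.2 fun j => Set.disjoint_iUnion_right.2 fun k => hdisj j k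

/-- If the cubes `Λ_L(u), Λ_L(v) ⊂ ℝ^{nd}` are both fully interactive,
i.e. `dist_∞(u, D) < (n−1)(2L+r₀)` and `dist_∞(v, D) < (n−1)(2L+r₀)` where `D` is
the diagonal, and `‖u − v‖_∞ ≥ 4(n−1)(2L+r₀)+2L`, then
`Π_j Λ_L(u) ∩ Π_k Λ_L(v) = ∅` for all `j, k`; in particular
`Π Λ_L(u) ∩ Π Λ_L(v) = ∅`.  Here `Π_j Λ_L(u)` is the open sup-norm cube of radius
`L` in `ℝ^d` around `u_j`, and full interactivity is expressed by the existence of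
`x ∈ ℤ^d` with `max_j ‖u_j − x‖_∞ < (n−1)(2L+r₀)`. -/
theorem stmt5 (d n : ℕ) (hn : 2 ≤ n) (L : ℕ) (hL : 1 ≤ L) (r0 : ℝ) (hr0 : 0 < r0)
    (u v : Fin n → Fin d → ℤ)
    (hu : ∃ x : Fin d → ℤ, ∀ j : Fin n, ‖u j - x‖ < ((n : ℝ) - 1) * (2 * L + r0))
    (hv : ∃ x : Fin d → ℤ, ∀ j : Fin n, ‖v j - x‖ < ((n : ℝ) - 1) * (2 * L + r0))
    (hsep : 4 * ((n : ℝ) - 1) * (2 * L + r0) + 2 * L ≤ ‖u - v‖) :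
    (∀ j k : Fin n,
      Metric.ball (fun i => ((u j i : ℝ))) (L : ℝ) ∩
        Metric.ball (fun i => ((v k i : ℝ))) (L : ℝ) = ∅) ∧
    (⋃ j, Metric.ball (fun i => ((u j i : ℝ))) (L : ℝ)) ∩
      (⋃ k, Metric.ball (fun i => ((v k i : ℝ))) (L : ℝ)) = ∅ :=
  stmt5_general d n L r0 u v hu hv hsep
end

section
/- Given k cubes Λ_L(u_1),…,Λ_L(u_k) in R^{nd} (sup-norm cubes of radius L centered at lattice points), there exist k̃ ≤ k pairwise disjoint cubes Λ_{l_1}(w_1),…,Λ_{l_{k̃}}(w_{k̃}) such that ⋃_{j} Λ_{l_j−7}(w_j) ⊇ ⋃_{r} Λ_L(u_r), each l_j is a positive integer multiple of (L+7), and Σ_j l_j ≤ k·(L+7). -/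
/-!
Merge overlapping cubes until none overlap. If lattice cubes of radii `ra` and `rb` meet,
clamping the first centre coordinatewise into the cube of radius `ra` about the second gives a
lattice point within `rb` of the first centre and within `ra` of the second; the cube of radius
`ra + rb` about it contains both cubes once all three are shrunk by `7`. A merge lowers the number
of cubes, keeps the total radius and keeps every radius a multiple of `L + 7`, so starting from
the `k` cubes of radius `L + 7` the process ends with the required family.
-/

open Metric

theorem List.exists_perm_cons_cons_of_not_pairwise {α : Type*} {R : α → α → Prop} {l : List α}
    (h : ¬ l.Pairwise R) : ∃ a b t, l.Perm (a :: b :: t) ∧ ¬ R a b := by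
  simp only [List.pairwise_iff_forall_sublist, not_forall] at h
  obtain ⟨a, b, hab, hR⟩ := h
  obtain ⟨t, ht⟩ := hab.exists_perm_append
  exact ⟨a, b, t, ht, hR⟩

theorem exists_pairwise_disjoint_of_merge {ι X M : Type*} [AddCommMonoid M]
    (big small : ι → Set X) (w : ι → M)
    (merge : ∀ a b, ¬ Disjoint (big a) (big b) →
      ∃ c, small a ∪ small b ⊆ small c ∧ w c = w a + w b)
    (s : List ι) :
    ∃ l : List ι, l.length ≤ s.length ∧ l.Pairwise (fun a b => Disjoint (big a) (big b)) ∧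
      (⋃ a ∈ s, small a) ⊆ (⋃ a ∈ l, small a) ∧ (l.map w).sum = (s.map w).sum := by
  induction hn : s.length using Nat.strong_induction_on generalizing s with
  | _ n ih =>
    by_cases hs : s.Pairwise (fun a b => Disjoint (big a) (big b))
    · exact ⟨s, hn.le, hs, subset_rfl, rfl⟩
    obtain ⟨a, b, t, hperm, hab⟩ := List.exists_perm_cons_cons_of_not_pairwise hs
    obtain ⟨c, hsub, hw⟩ := merge a b hab
    have hlen : s.length = t.length + 2 := by simp [hperm.length_eq]
    obtain ⟨l, hl_len, hl_disj, hl_cov, hl_sum⟩ := ih (t.length + 1) (by omega) (c :: t) rfl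
    refine ⟨l, hl_len.trans (by omega), hl_disj, ?_, ?_⟩
    · refine Set.iUnion₂_subset fun x hx => ?_
      refine Set.Subset.trans ?_ hl_cov
      rcases List.mem_cons.1 (hperm.mem_iff.1 hx) with rfl | hx
      · exact (Set.subset_union_left.trans hsub).trans
          (Set.subset_biUnion_of_mem List.mem_cons_self)
      rcases List.mem_cons.1 hx with rfl | hx
      · exact (Set.subset_union_right.trans hsub).trans
          (Set.subset_biUnion_of_mem List.mem_cons_self)
      · exact Set.subset_biUnion_of_mem (List.mem_cons_of_mem c hx)
    · rw [hl_sum, (hperm.map w).sum_eq]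
      simp [hw, add_assoc]

theorem ball_union_ball_subset_ball {X : Type*} [PseudoMetricSpace X] {a b c : X} {ra rb s : ℝ}
    (ha : dist a c ≤ rb) (hb : dist b c ≤ ra) :
    ball a (ra - s) ∪ ball b (rb - s) ⊆ ball c (ra + rb - s) :=
  Set.union_subset (ball_subset_ball' (by linarith)) (ball_subset_ball' (by linarith))

theorem Int.exists_abs_sub_le_of_abs_sub_le {a b : ℤ} {p q : ℕ} (h : |a - b| ≤ p + q) :
    ∃ c : ℤ, |a - c| ≤ q ∧ |b - c| ≤ p := by
  refine ⟨max (b - p) (min a (b + p)), ?_⟩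
  rw [abs_le] at h
  rw [abs_le, abs_le]
  omega

theorem exists_int_dist_le_of_dist_lt {ι : Type*} [Fintype ι] {a b : ι → ℤ} {p q : ℕ}
    (h : dist (fun t => (a t : ℝ)) (fun t => (b t : ℝ)) < p + q) :
    ∃ c : ι → ℤ, dist (fun t => (a t : ℝ)) (fun t => (c t : ℝ)) ≤ q ∧
      dist (fun t => (b t : ℝ)) (fun t => (c t : ℝ)) ≤ p := by
  have hcoord (t : ι) : |a t - b t| ≤ p + q := by
    have := (dist_le_pi_dist _ _ t).trans_lt h
    rw [Real.dist_eq] at this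
    exact_mod_cast this.le
  choose c hc using fun t => Int.exists_abs_sub_le_of_abs_sub_le (hcoord t)
  refine ⟨c, (dist_pi_le_iff (by positivity)).2 fun t => ?_,
    (dist_pi_le_iff (by positivity)).2 fun t => ?_⟩ <;> rw [Real.dist_eq]
  · exact_mod_cast (hc t).1
  · exact_mod_cast (hc t).2

theorem exists_int_ball_union_subset {ι : Type*} [Fintype ι] {a b : ι → ℤ} {p q : ℕ}
    (h : ¬ Disjoint (ball (fun t => (a t : ℝ)) p) (ball (fun t => (b t : ℝ)) q)) (s : ℝ) :
    ∃ c : ι → ℤ, ball (fun t => (a t : ℝ)) (p - s) ∪ ball (fun t => (b t : ℝ)) (q - s) ⊆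
      ball (fun t => (c t : ℝ)) ((p + q : ℕ) - s) := by
  obtain ⟨c, hac, hbc⟩ := exists_int_dist_le_of_dist_lt
    (dist_lt_add_of_nonempty_ball_inter_ball (Set.not_disjoint_iff_nonempty_inter.1 h))
  exact ⟨c, by simpa using ball_union_ball_subset_ball hac hbc⟩

theorem stmt6_general (D k L : ℕ) (u : Fin k → Fin D → ℤ) :
    ∃ (k' : ℕ) (_ : k' ≤ k) (w : Fin k' → Fin D → ℤ) (l : Fin k' → ℕ),
      (∀ i j : Fin k', i ≠ j →
        Metric.ball (fun t => ((w i t : ℝ))) (l i : ℝ) ∩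
          Metric.ball (fun t => ((w j t : ℝ))) (l j : ℝ) = ∅) ∧
      ((⋃ r, Metric.ball (fun t => ((u r t : ℝ))) (L : ℝ)) ⊆
        ⋃ j, Metric.ball (fun t => ((w j t : ℝ))) ((l j : ℝ) - 7)) ∧
      (∀ j, ∃ m : ℕ, 0 < m ∧ l j = m * (L + 7)) ∧
      (∑ j, l j) ≤ k * (L + 7) := by
  let cube (s : ℝ) (c : (Fin D → ℤ) × ℕ+) : Set (Fin D → ℝ) :=
    ball (fun t => (c.1 t : ℝ)) (((c.2 * (L + 7) : ℕ) : ℝ) - s)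
  have merge (a b) (h : ¬ Disjoint (cube 0 a) (cube 0 b)) :
      ∃ c, cube 7 a ∪ cube 7 b ⊆ cube 7 c ∧ (c.2 : ℕ) = a.2 + b.2 := by
    obtain ⟨c, hc⟩ := exists_int_ball_union_subset (by simpa only [cube, sub_zero] using h) 7
    exact ⟨(c, a.2 + b.2), by simpa only [cube, PNat.add_coe, add_mul] using hc, PNat.add_coe _ _⟩
  obtain ⟨l, hlen, hdisj, hcov, hsum⟩ := exists_pairwise_disjoint_of_merge (cube 0) (cube 7)
    (fun c => (c.2 : ℕ)) merge (List.ofFn fun r => (u r, 1))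
  refine ⟨l.length, by simpa using hlen, fun j => l[j].1, fun j => l[j].2 * (L + 7),
    fun i j hij => ?_, ?_, fun j => ⟨l[j].2, l[j].2.pos, rfl⟩, ?_⟩
  · rw [← Set.disjoint_iff_inter_eq_empty]
    rcases hij.lt_or_gt with hij | hij
    · simpa [cube] using hdisj.rel_get_of_lt hij
    · simpa [cube] using (hdisj.rel_get_of_lt hij).symm
  · refine Set.iUnion_subset fun r y hy => ?_
    obtain ⟨c, hc, hyc⟩ := Set.mem_iUnion₂.1 <| hcov <|
      Set.mem_biUnion (List.mem_ofFn.2 ⟨r, rfl⟩) (by simpa [cube] using hy)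
    obtain ⟨j, hj, rfl⟩ := List.mem_iff_getElem.1 hc
    exact Set.mem_iUnion.2 ⟨⟨j, hj⟩, hyc⟩
  · calc ∑ j : Fin l.length, (l[j].2 : ℕ) * (L + 7)
        = (l.map fun c => (c.2 : ℕ)).sum * (L + 7) := by
          simp only [← Finset.sum_mul, Fin.getElem_fin]
          rw [Fin.sum_univ_fun_getElem l fun c => (c.2 : ℕ)]
      _ ≤ k * (L + 7) := by simp [hsum, Function.comp_def]

/-- Given `k` cubes `Λ_L(u_1),…,Λ_L(u_k)` in `ℝ^D` (open sup-norm
cubes of radius `L` centered at lattice points; here `D = nd`), there exist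
`k' ≤ k` pairwise disjoint cubes `Λ_{l_j}(w_j)` such that
`⋃_j Λ_{l_j−7}(w_j) ⊇ ⋃_r Λ_L(u_r)`, each `l_j` is a positive integer multiple
of `L+7`, and `Σ_j l_j ≤ k·(L+7)`. -/
theorem stmt6 (D k L : ℕ) (hL : 1 ≤ L) (u : Fin k → Fin D → ℤ) :
    ∃ (k' : ℕ) (_ : k' ≤ k) (w : Fin k' → Fin D → ℤ) (l : Fin k' → ℕ),
      (∀ i j : Fin k', i ≠ j →
        Metric.ball (fun t => ((w i t : ℝ))) (l i : ℝ) ∩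
          Metric.ball (fun t => ((w j t : ℝ))) (l j : ℝ) = ∅) ∧
      ((⋃ r, Metric.ball (fun t => ((u r t : ℝ))) (L : ℝ)) ⊆
        ⋃ j, Metric.ball (fun t => ((w j t : ℝ))) ((l j : ℝ) - 7)) ∧
      (∀ j, ∃ m : ℕ, 0 < m ∧ l j = m * (L + 7)) ∧
      (∑ j, l j) ≤ k * (L + 7) :=
  stmt6_general D k L u
end

section
/- Let H be a self-adjoint operator on a Hilbert space with H ≥ s (i.e., ⟨Hf, f⟩ ≥ s‖f‖² on the domain), and let A, B be orthogonal projections (multiplication by characteristic functions) such that for every t > 0 one has ‖A e^{−tH} B‖ ≤ e^{−ts} e^{−δ²/(4t)} for some δ > 0. Then for every E < s, setting η = s − E, one has ‖A (H − E)^{−1} B‖ ≤ (δ/√η)·K₁(δ√η), where K₁ is the modified Bessel function of the second kind of order 1; consequently ‖A (H − E)^{−1} B‖ ≤ √(π/2)·(√δ/η^{3/4} + 3/(8√δ·η^{5/4}))·e^{−δ√η}. -/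
open MeasureTheory

/-- `K₁` through its integral representation, valid for `z > 0`. -/
noncomputable def besselK1 (z : ℝ) : ℝ :=
  (z / 4) * ∫ t in Set.Ioi (0 : ℝ), (t : ℝ) ^ (-2 : ℤ) * Real.exp (-t - z ^ 2 / (4 * t))

/-!
Bounding the Laplace integral of the semigroup estimate reduces everything to
`J(z) = ∫₀^∞ e^{-t - z²/(4t)} dt`, which equals `z K₁(z)` by the substitution `t ↦ z²/(4t)`.
For the bound on `K₁`, the same substitution folds `(0, z/2)` onto `(z/2, ∞)`, and then
`u = t + z²/(4t) - z` gives `J(z) = ∫₀^∞ e^{-(u+z)} (u+z)/√(u² + 2uz) du`. The elementary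
inequality `(u+z)/√(u² + 2uz) ≤ √(z/2) (u^{-1/2} + (3/(4z)) u^{1/2})` turns this into the Gamma
integrals `Γ(1/2) = √π` and `Γ(3/2) = √π/2`.
-/

open Real Set

lemma integrableOn_exp_neg_mul_sub_div {a c : ℝ} (ha : 0 < a) (hc : 0 ≤ c) :
    IntegrableOn (fun t => exp (-(a * t) - c / (4 * t))) (Ioi 0) := by
  refine (exp_neg_integrableOn_Ioi 0 ha).mono' ?_ ?_
  · refine ContinuousOn.aestronglyMeasurable ?_ measurableSet_Ioi
    fun_prop (disch := exact fun t (ht : 0 < t) => by positivity)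
  · filter_upwards [ae_restrict_mem measurableSet_Ioi] with t (ht : 0 < t)
    rw [norm_of_nonneg (exp_nonneg _), exp_le_exp, neg_mul]
    linarith [div_nonneg hc (by positivity : (0 : ℝ) ≤ 4 * t)]

lemma integral_image_const_div {c : ℝ} (hc : 0 < c) {s : Set ℝ} (hs : MeasurableSet s)
    (hs₀ : s ⊆ Ioi 0) (f : ℝ → ℝ) :
    ∫ t in (c / ·) '' s, f t = ∫ t in s, c / t ^ 2 * f (c / t) := by
  have hderiv : ∀ t ∈ s, HasDerivWithinAt (c / ·) (-c / t ^ 2) s t := fun t ht => by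
    simpa [div_eq_mul_inv, neg_div] using
      ((hasDerivAt_inv (hs₀ ht).ne').const_mul c).hasDerivWithinAt
  rw [integral_image_eq_integral_abs_deriv_smul hs hderiv
    (fun a _ b _ h => by simpa [div_div_cancel₀ hc.ne'] using congrArg (c / ·) h)]
  refine setIntegral_congr_fun hs fun t ht => ?_
  rw [smul_eq_mul, abs_div, abs_neg, abs_of_pos hc, abs_of_pos (pow_pos (hs₀ ht) 2)]

lemma image_const_div_Ioi_zero {c : ℝ} (hc : 0 < c) : (c / ·) '' Ioi 0 = Ioi 0 := by
  ext y
  refine ⟨fun ⟨t, ht, hty⟩ => hty ▸ div_pos hc ht, fun hy => ⟨c / y, div_pos hc hy, ?_⟩⟩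
  exact div_div_cancel₀ hc.ne'

lemma image_const_div_Ioi {a c : ℝ} (ha : 0 < a) (hc : 0 < c) :
    (c / ·) '' Ioi a = Ioo 0 (c / a) := by
  ext y
  constructor
  · rintro ⟨t, ht : a < t, rfl⟩
    exact ⟨div_pos hc (ha.trans ht), div_lt_div_of_pos_left hc ha ht⟩
  · rintro ⟨hy, hya⟩
    refine ⟨c / y, ?_, div_div_cancel₀ hc.ne'⟩
    exact (lt_div_comm₀ hy ha).mp hya

lemma besselK1_eq_inv_mul_integral {z : ℝ} (hz : 0 < z) :
    besselK1 z = z⁻¹ * ∫ t in Ioi 0, exp (-t - z ^ 2 / (4 * t)) := by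
  have h := integral_image_const_div (c := z ^ 2 / 4) (by positivity) measurableSet_Ioi
    subset_rfl fun t => t ^ (-2 : ℤ) * exp (-t - z ^ 2 / (4 * t))
  rw [image_const_div_Ioi_zero (by positivity)] at h
  rw [besselK1, h, ← integral_const_mul, ← integral_const_mul]
  refine setIntegral_congr_fun measurableSet_Ioi fun t (ht : 0 < t) => ?_
  have hinv : z ^ 2 / (4 * (z ^ 2 / 4 / t)) = t := by field_simp
  rw [hinv, zpow_neg, zpow_two]
  field_simp
  ring_nf

lemma integral_exp_neg_mul_sub_div_eq_besselK1 {η δ : ℝ} (hη : 0 < η) (hδ : 0 < δ) :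
    ∫ t in Ioi 0, exp (-(η * t) - δ ^ 2 / (4 * t)) = δ / √η * besselK1 (δ * √η) := by
  have hsq : √η ^ 2 = η := sq_sqrt hη.le
  have hscale := integral_comp_mul_left_Ioi (fun t => exp (-t - (δ * √η) ^ 2 / (4 * t))) 0 hη
  rw [mul_zero, smul_eq_mul] at hscale
  have hcoef : δ / √η * (δ * √η)⁻¹ = η⁻¹ := by field_simp; exact hsq.symm
  rw [besselK1_eq_inv_mul_integral (by positivity), ← mul_assoc, hcoef, ← hscale]
  refine setIntegral_congr_fun measurableSet_Ioi fun t (ht : 0 < t) => ?_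
  rw [mul_pow, hsq]
  field_simp

lemma integral_exp_neg_sub_div_eq_Ioi_half {z : ℝ} (hz : 0 < z) :
    ∫ t in Ioi 0, exp (-t - z ^ 2 / (4 * t)) =
      ∫ t in Ioi (z / 2), exp (-t - z ^ 2 / (4 * t)) * (1 + z ^ 2 / (4 * t ^ 2)) := by
  set g := fun t => exp (-t - z ^ 2 / (4 * t))
  have hz2 : 0 < z / 2 := half_pos hz
  have hg : IntegrableOn g (Ioi 0) := by
    simpa using integrableOn_exp_neg_mul_sub_div one_pos (sq_nonneg z)
  have hg' : IntegrableOn g (Ioi (z / 2)) := hg.mono_set (Ioi_subset_Ioi hz2.le)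
  have hfold : ∫ t in Ioo 0 (z / 2), g t = ∫ t in Ioi (z / 2), z ^ 2 / 4 / t ^ 2 * g t := by
    have himage : (z ^ 2 / 4 / ·) '' Ioi (z / 2) = Ioo 0 (z / 2) := by
      rw [image_const_div_Ioi hz2 (by positivity)]
      congr 1
      field_simp
      ring
    rw [← himage, integral_image_const_div (by positivity) measurableSet_Ioi
      (Ioi_subset_Ioi hz2.le)]
    refine setIntegral_congr_fun measurableSet_Ioi fun t _ => ?_
    simp only [g]
    congr 2
    field_simp
    ring
  have hweight : IntegrableOn (fun t => z ^ 2 / 4 / t ^ 2 * g t) (Ioi (z / 2)) := by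
    refine hg'.bdd_mul (c := 1) ?_ ?_
    · refine ContinuousOn.aestronglyMeasurable ?_ measurableSet_Ioi
      fun_prop (disch := exact fun t (ht : z / 2 < t) => (pow_pos (hz2.trans ht) 2).ne')
    · filter_upwards [ae_restrict_mem measurableSet_Ioi] with t (ht : z / 2 < t)
      rw [norm_of_nonneg (by positivity), div_le_one (pow_pos (hz2.trans ht) 2)]
      nlinarith
  calc ∫ t in Ioi 0, g t = (∫ t in Ioc 0 (z / 2), g t) + ∫ t in Ioi (z / 2), g t := by
        rw [← setIntegral_union (Ioc_disjoint_Ioi le_rfl) measurableSet_Ioi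
          (hg.mono_set Ioc_subset_Ioi_self) hg', Ioc_union_Ioi_eq_Ioi hz2.le]
    _ = ∫ t in Ioi (z / 2), g t * (1 + z ^ 2 / (4 * t ^ 2)) := by
        rw [integral_Ioc_eq_integral_Ioo, hfold, ← integral_add hweight hg']
        refine setIntegral_congr_fun measurableSet_Ioi fun t _ => ?_
        ring

lemma image_add_sq_div_sub_Ioi_half {z : ℝ} (hz : 0 < z) :
    (fun t => t + z ^ 2 / (4 * t) - z) '' Ioi (z / 2) = Ioi 0 := by
  ext u
  constructor
  · rintro ⟨t, ht : z / 2 < t, rfl⟩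
    have ht0 : 0 < t := (half_pos hz).trans ht
    have : t + z ^ 2 / (4 * t) - z = (2 * t - z) ^ 2 / (4 * t) := by field_simp; ring
    change 0 < t + z ^ 2 / (4 * t) - z
    rw [this]
    exact div_pos (pow_pos (by linarith) 2) (by positivity)
  · intro (hu : 0 < u)
    set r := √(u ^ 2 + 2 * u * z)
    have hr : r ^ 2 = u ^ 2 + 2 * u * z := sq_sqrt (by positivity)
    have hr0 : 0 ≤ r := sqrt_nonneg _
    refine ⟨(u + z + r) / 2, by rw [mem_Ioi]; linarith, ?_⟩
    field_simp
    linear_combination 4 * hr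

lemma integral_Ioi_half_eq_integral_Ioi_zero {z : ℝ} (hz : 0 < z) :
    ∫ t in Ioi (z / 2), exp (-t - z ^ 2 / (4 * t)) * (1 + z ^ 2 / (4 * t ^ 2)) =
      ∫ u in Ioi 0, exp (-(u + z)) * ((u + z) / √(u ^ 2 + 2 * u * z)) := by
  have hz2 : 0 < z / 2 := half_pos hz
  have hderiv : ∀ t ∈ Ioi (z / 2), HasDerivWithinAt (fun t => t + z ^ 2 / (4 * t) - z)
      (1 - z ^ 2 / (4 * t ^ 2)) (Ioi (z / 2)) t := fun t (ht : z / 2 < t) => by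
    have ht0 : t ≠ 0 := (hz2.trans ht).ne'
    have h := ((hasDerivAt_id' t).add ((hasDerivAt_const t (z ^ 2)).div
      ((hasDerivAt_id' t).const_mul 4) (by positivity))).sub_const z
    exact (h.congr_deriv (by field_simp; ring)).hasDerivWithinAt
  have hinj : InjOn (fun t => t + z ^ 2 / (4 * t) - z) (Ioi (z / 2)) := by
    intro a (ha : z / 2 < a) b (hb : z / 2 < b) hab
    have ha0 : 0 < a := hz2.trans ha
    have hb0 : 0 < b := hz2.trans hb
    have hprod : (a - b) * (4 * a * b - z ^ 2) = 0 := by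
      field_simp at hab
      linear_combination hab
    have hpos : 0 < 4 * a * b - z ^ 2 := by nlinarith
    simpa [sub_eq_zero, hpos.ne'] using hprod
  rw [← image_add_sq_div_sub_Ioi_half hz,
    integral_image_eq_integral_abs_deriv_smul measurableSet_Ioi hderiv hinj]
  refine setIntegral_congr_fun measurableSet_Ioi fun t (ht : z / 2 < t) => ?_
  have ht0 : 0 < t := hz2.trans ht
  have hgap : 0 < t - z ^ 2 / (4 * t) := by
    rw [sub_pos, div_lt_iff₀ (by positivity)]; nlinarith
  have hsqrt : √((t + z ^ 2 / (4 * t) - z) ^ 2 + 2 * (t + z ^ 2 / (4 * t) - z) * z) =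
      t - z ^ 2 / (4 * t) := by
    rw [← sqrt_sq hgap.le]; congr 1; field_simp; ring
  have hweight : 0 < 1 - z ^ 2 / (4 * t ^ 2) := by
    rw [sub_pos, div_lt_one (by positivity)]; nlinarith
  have hratio : (1 - z ^ 2 / (4 * t ^ 2)) * ((t + z ^ 2 / (4 * t)) / (t - z ^ 2 / (4 * t))) =
      1 + z ^ 2 / (4 * t ^ 2) := by
    rw [mul_div_assoc', div_eq_iff hgap.ne']
    field_simp
  rw [hsqrt, smul_eq_mul, abs_of_pos hweight, sub_add_cancel, neg_add', ← hratio]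
  ring

lemma add_div_sqrt_sq_add_le {u z : ℝ} (hu : 0 < u) (hz : 0 < z) :
    (u + z) / √(u ^ 2 + 2 * u * z) ≤ √(z / 2) * ((√u)⁻¹ + 3 / (4 * z) * √u) := by
  refine le_of_pow_le_pow_left₀ two_ne_zero (by positivity) ?_
  rw [div_pow, sq_sqrt (by positivity), mul_pow, sq_sqrt (by positivity),
    div_le_iff₀ (by positivity)]
  have hslack : (z / 2 * ((√u)⁻¹ + 3 / (4 * z) * √u) ^ 2) * (u ^ 2 + 2 * u * z) =
      (u + z) ^ 2 + (9 * u ^ 3 + 10 * u ^ 2 * z) / (32 * z) := by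
    field_simp
    rw [sq_sqrt hu.le]
    ring
  rw [hslack]
  have : 0 ≤ (9 * u ^ 3 + 10 * u ^ 2 * z) / (32 * z) := by positivity
  linarith

lemma integral_exp_neg_sub_div_le {z : ℝ} (hz : 0 < z) :
    ∫ t in Ioi 0, exp (-t - z ^ 2 / (4 * t)) ≤ √(π / 2) * √z * (1 + 3 / (8 * z)) * exp (-z) := by
  have hΓ₁ := GammaIntegral_convergent (by norm_num : (0 : ℝ) < 1 / 2)
  have hΓ₃ := GammaIntegral_convergent (by norm_num : (0 : ℝ) < 3 / 2)
  rw [integral_exp_neg_sub_div_eq_Ioi_half hz, integral_Ioi_half_eq_integral_Ioi_zero hz]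
  calc _ ≤ ∫ u in Ioi 0, exp (-z) * √(z / 2) * (exp (-u) * u ^ ((1 : ℝ) / 2 - 1) +
          3 / (4 * z) * (exp (-u) * u ^ ((3 : ℝ) / 2 - 1))) := by
        refine integral_mono_of_nonneg ?_ ((hΓ₁.add (hΓ₃.const_mul _)).const_mul _) ?_
        · filter_upwards [ae_restrict_mem measurableSet_Ioi] with u (hu : 0 < u)
          positivity
        · filter_upwards [ae_restrict_mem measurableSet_Ioi] with u (hu : 0 < u)
          have hhalf : u ^ ((1 : ℝ) / 2 - 1) = (√u)⁻¹ := by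
            rw [sqrt_eq_rpow, ← rpow_neg hu.le]; norm_num
          have hthree : u ^ ((3 : ℝ) / 2 - 1) = √u := by
            rw [sqrt_eq_rpow]; norm_num
          rw [hhalf, hthree, neg_add', exp_sub, exp_neg z]
          calc _ = exp (-u) * (exp z)⁻¹ * ((u + z) / √(u ^ 2 + 2 * u * z)) := by ring
            _ ≤ exp (-u) * (exp z)⁻¹ * (√(z / 2) * ((√u)⁻¹ + 3 / (4 * z) * √u)) := by
                gcongr; exact add_div_sqrt_sq_add_le hu hz
            _ = _ := by ring
    _ = exp (-z) * √(z / 2) * (Gamma (1 / 2) + 3 / (4 * z) * Gamma (3 / 2)) := by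
        rw [integral_const_mul, integral_add hΓ₁ (hΓ₃.const_mul _), integral_const_mul,
          Gamma_eq_integral (by norm_num), Gamma_eq_integral (by norm_num)]
    _ = √(π / 2) * √z * (1 + 3 / (8 * z)) * exp (-z) := by
        rw [show (3 : ℝ) / 2 = 1 / 2 + 1 by norm_num, Gamma_add_one (by norm_num),
          Gamma_one_half_eq, sqrt_div hz.le, sqrt_div pi_pos.le]
        field_simp
        ring

lemma besselK1_le {z : ℝ} (hz : 0 < z) :
    besselK1 z ≤ √(π / (2 * z)) * exp (-z) * (1 + 3 / (8 * z)) := by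
  rw [besselK1_eq_inv_mul_integral hz]
  calc _ ≤ z⁻¹ * (√(π / 2) * √z * (1 + 3 / (8 * z)) * exp (-z)) :=
        mul_le_mul_of_nonneg_left (integral_exp_neg_sub_div_le hz) (by positivity)
    _ = _ := by
        rw [show π / (2 * z) = π / 2 / z by ring, sqrt_div (div_nonneg pi_pos.le zero_le_two)]
        field_simp
        rw [sq_sqrt hz.le]

lemma div_sqrt_mul_besselK1_bound_eq {δ η : ℝ} (hδ : 0 < δ) (hη : 0 < η) :
    δ / √η * (√(π / (2 * (δ * √η))) * exp (-(δ * √η)) * (1 + 3 / (8 * (δ * √η)))) =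
      √(π / 2) * (√δ / η ^ ((3 : ℝ) / 4) + 3 / (8 * √δ * η ^ ((5 : ℝ) / 4))) *
        exp (-δ * √η) := by
  set p := η ^ ((1 : ℝ) / 4)
  have hp : 0 < p := rpow_pos_of_pos hη _
  have hpow : ∀ n : ℕ, η ^ ((n : ℝ) / 4) = p ^ n := fun n => by
    rw [← rpow_mul_natCast hη.le]; ring_nf
  have hsqrt : √η = p ^ 2 := by rw [sqrt_eq_rpow, ← hpow 2]; norm_num
  have h3 : η ^ ((3 : ℝ) / 4) = p ^ 3 := by exact_mod_cast hpow 3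
  have h5 : η ^ ((5 : ℝ) / 4) = p ^ 5 := by exact_mod_cast hpow 5
  rw [h3, h5, hsqrt, neg_mul, sqrt_div pi_pos.le, sqrt_div pi_pos.le, sqrt_mul two_pos.le,
    sqrt_mul hδ.le, sqrt_sq hp.le]
  field_simp
  rw [sq_sqrt hδ.le]
  ring

lemma norm_setIntegral_exp_smul_le {X : Type*} [NormedAddCommGroup X] [NormedSpace ℂ X]
    {F : ℝ → X} {s E δ : ℝ} (hE : E < s)
    (hF : ∀ t : ℝ, 0 < t → ‖F t‖ ≤ exp (-t * s) * exp (-δ ^ 2 / (4 * t))) :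
    ‖∫ t in Ioi 0, (exp (t * E) : ℂ) • F t‖ ≤
      ∫ t in Ioi 0, exp (-((s - E) * t) - δ ^ 2 / (4 * t)) := by
  refine norm_integral_le_of_norm_le
    (integrableOn_exp_neg_mul_sub_div (sub_pos.mpr hE) (sq_nonneg δ)) ?_
  filter_upwards [ae_restrict_mem measurableSet_Ioi] with t (ht : 0 < t)
  calc ‖(exp (t * E) : ℂ) • F t‖ = exp (t * E) * ‖F t‖ := by
        rw [norm_smul, Complex.norm_real, norm_of_nonneg (exp_nonneg _)]
    _ ≤ exp (t * E) * (exp (-t * s) * exp (-δ ^ 2 / (4 * t))) := by gcongr; exact hF t ht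
    _ = exp (-((s - E) * t) - δ ^ 2 / (4 * t)) := by rw [← exp_add, ← exp_add]; ring_nf

theorem stmt7_general {H : Type*} [NormedAddCommGroup H] [InnerProductSpace ℂ H]
    (A B R : H →L[ℂ] H) (T : ℝ → H →L[ℂ] H)
    (s E δ : ℝ) (hδ : 0 < δ) (hE : E < s)
    (hT : ∀ t : ℝ, 0 < t →
      ‖A.comp ((T t).comp B)‖ ≤ Real.exp (-t * s) * Real.exp (-δ ^ 2 / (4 * t)))
    (hR : A.comp (R.comp B)
      = ∫ t in Set.Ioi (0 : ℝ), (Real.exp (t * E) : ℂ) • (A.comp ((T t).comp B))) :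
    ‖A.comp (R.comp B)‖ ≤ (δ / Real.sqrt (s - E)) * besselK1 (δ * Real.sqrt (s - E)) ∧
    ‖A.comp (R.comp B)‖ ≤ Real.sqrt (Real.pi / 2) *
      (Real.sqrt δ / (s - E) ^ ((3 : ℝ) / 4) + 3 / (8 * Real.sqrt δ * (s - E) ^ ((5 : ℝ) / 4))) *
      Real.exp (-δ * Real.sqrt (s - E)) := by
  have hη : 0 < s - E := sub_pos.mpr hE
  have hbound := norm_setIntegral_exp_smul_le hE hT
  rw [← hR, integral_exp_neg_mul_sub_div_eq_besselK1 hη hδ] at hbound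
  refine ⟨hbound, hbound.trans ?_⟩
  rw [← div_sqrt_mul_besselK1_bound_eq hδ hη]
  exact mul_le_mul_of_nonneg_left (besselK1_le (by positivity)) (by positivity)

/-- abstract Combes–Thomas bound from a Davies–Gaffney semigroup bound:
`H` is a self-adjoint operator with `H ≥ s`, represented through its semigroup
`T t = e^{-tH}` and the Laplace representation of the resolvent
`A (H−E)^{-1} B = ∫₀^∞ e^{tE} A e^{-tH} B dt` (valid for `E < s`).  If
`‖A e^{-tH} B‖ ≤ e^{-ts} e^{-δ²/(4t)}` for all `t > 0`, then with `η = s − E`,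
`‖A (H−E)^{-1} B‖ ≤ (δ/√η)·K₁(δ√η) ≤ √(π/2)(√δ/η^{3/4} + 3/(8√δ η^{5/4})) e^{-δ√η}`. -/
theorem stmt7 {H : Type*} [NormedAddCommGroup H] [InnerProductSpace ℂ H] [CompleteSpace H]
    (A B R : H →L[ℂ] H) (T : ℝ → H →L[ℂ] H)
    (s E δ : ℝ) (hδ : 0 < δ) (hE : E < s)
    (hT : ∀ t : ℝ, 0 < t →
      ‖A.comp ((T t).comp B)‖ ≤ Real.exp (-t * s) * Real.exp (-δ ^ 2 / (4 * t)))
    (hmeas : AEStronglyMeasurable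
      (fun t : ℝ => (Real.exp (t * E) : ℂ) • (A.comp ((T t).comp B)))
      (volume.restrict (Set.Ioi (0 : ℝ))))
    (hR : A.comp (R.comp B)
      = ∫ t in Set.Ioi (0 : ℝ), (Real.exp (t * E) : ℂ) • (A.comp ((T t).comp B))) :
    ‖A.comp (R.comp B)‖ ≤ (δ / Real.sqrt (s - E)) * besselK1 (δ * Real.sqrt (s - E)) ∧
    ‖A.comp (R.comp B)‖ ≤ Real.sqrt (Real.pi / 2) *
      (Real.sqrt δ / (s - E) ^ ((3 : ℝ) / 4) + 3 / (8 * Real.sqrt δ * (s - E) ^ ((5 : ℝ) / 4))) *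
      Real.exp (-δ * Real.sqrt (s - E)) :=
  stmt7_general A B R T s E δ hδ hE hT hR
end

section
/- Fix constants N ≥ 1, K ≥ 1, α = 3/2, β = 1/2. Define sequences L_{k+1} = ⌊L_k^α⌋ + 1 and m_{L_{k+1}} = m_{L_k} − (96NK/L_k^{α−1})·m_{L_k} − 3/L_k^{α(1−β)}, with initial data m_{L_0} = 1/(3 L_0^{(1−β)/2}). Then for L_0 sufficiently large (depending on N, K): (a) m_{L_k} > 48NK / L_k^{1−β} for all k ≥ 0; (b) the total decrement S = Σ_{j≥0}(m_{L_j} − m_{L_{j+1}}) satisfies S ≤ m_{L_0}/2; consequently m_{L_k} ≥ m_{L_0}/2 > 0 for all k. -/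
/-!
Once `L₀ ≥ 16` we have `L_{k+1} > L_k^{3/2} ≥ 4 L_k`, so `L_k ≥ 4^k L₀`. Write `κ = 96NK`
and `s = L₀^{1/4}`, so that `m₀ = 1/(3s)`. As long as `0 ≤ m_k ≤ m₀`, the `k`-th decrement
`κ m_k / L_k^{1/2} + 3 / L_k^{3/4}` is at most `2^{-k} (κ/3 + 3) / s³`, and these bounds sum
to `2 (κ/3 + 3) / s³ ≤ 1/(6s) = m₀/2` once `s ≥ 4κ + 6`. By induction every `m_k` stays in
`[m₀/2, m₀]`, and (a) follows from `48NK / L_k^{1/2} ≤ κ / (2s²) < m₀/2`.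
-/

open Finset

lemma four_mul_le_rpow_three_halves {x : ℝ} (hx : 16 ≤ x) : 4 * x ≤ x ^ ((3 : ℝ) / 2) := by
  have hsqrt : 4 ≤ x ^ ((1 : ℝ) / 2) := by
    rw [← Real.sqrt_eq_rpow, Real.le_sqrt (by norm_num) (by linarith)]
    linarith
  rw [show (3 : ℝ) / 2 = 1 + 1 / 2 by norm_num, Real.rpow_add (by linarith), Real.rpow_one]
  nlinarith

lemma four_pow_mul_le_of_floor_rpow {L : ℕ → ℕ}
    (hL : ∀ k, L (k + 1) = ⌊(L k : ℝ) ^ ((3 : ℝ) / 2)⌋₊ + 1) (h16 : 16 ≤ L 0) (j : ℕ) :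
    4 ^ j * L 0 ≤ L j := by
  induction j with
  | zero => simp
  | succ j ih =>
    have hLj : 16 ≤ L j := h16.trans ((Nat.le_mul_of_pos_left _ (by positivity)).trans ih)
    have hstep : 4 * L j ≤ ⌊(L j : ℝ) ^ ((3 : ℝ) / 2)⌋₊ := by
      refine Nat.le_floor ?_
      push_cast
      exact four_mul_le_rpow_three_halves (by exact_mod_cast hLj)
    rw [hL j, pow_succ']
    linarith [Nat.mul_le_mul_left 4 ih]

lemma two_pow_mul_rpow_le_rpow {x y p : ℝ} (j : ℕ) (hx : 0 ≤ x) (hp : 1 / 2 ≤ p)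
    (h : 4 ^ j * x ≤ y) : 2 ^ j * x ^ p ≤ y ^ p := by
  have h2 : (2 : ℝ) ^ j ≤ ((4 : ℝ) ^ j) ^ p :=
    calc (2 : ℝ) ^ j = ((4 : ℝ) ^ j) ^ ((1 : ℝ) / 2) := by
          rw [← Real.sqrt_eq_rpow, ← Real.sqrt_sq (by positivity : (0 : ℝ) ≤ 2 ^ j), ← pow_mul,
            mul_comm, pow_mul]
          norm_num
      _ ≤ ((4 : ℝ) ^ j) ^ p := Real.rpow_le_rpow_of_exponent_le (one_le_pow₀ (by norm_num)) hp
  calc 2 ^ j * x ^ p ≤ ((4 : ℝ) ^ j) ^ p * x ^ p := by gcongr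
    _ = (4 ^ j * x) ^ p := (Real.mul_rpow (by positivity) hx).symm
    _ ≤ y ^ p := Real.rpow_le_rpow (by positivity) h (by linarith)

section Decay

variable {m a b c : ℕ → ℝ}

lemma sub_sum_le_and_le_of_decay (hm : ∀ k, m (k + 1) = m k - a k * m k - b k)
    (ha : ∀ k, 0 ≤ a k) (hb : ∀ k, 0 ≤ b k) (hab : ∀ k, a k * m 0 + b k ≤ c k)
    (hc : ∀ n, ∑ k ∈ range n, c k ≤ m 0 / 2) (k : ℕ) :
    m 0 - ∑ j ∈ range k, c j ≤ m k ∧ m k ≤ m 0 := by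
  induction k with
  | zero => simp
  | succ k ih =>
    obtain ⟨hlow, hup⟩ := ih
    have hmk : 0 ≤ m k := by linarith [hc k, hc 0]
    have hamk : a k * m k ≤ a k * m 0 := mul_le_mul_of_nonneg_left hup (ha k)
    rw [hm k, sum_range_succ]
    constructor <;> linarith [hab k, mul_nonneg (ha k) hmk, hb k]

lemma half_le_of_decay (hm : ∀ k, m (k + 1) = m k - a k * m k - b k)
    (ha : ∀ k, 0 ≤ a k) (hb : ∀ k, 0 ≤ b k) (hab : ∀ k, a k * m 0 + b k ≤ c k)
    (hc : ∀ n, ∑ k ∈ range n, c k ≤ m 0 / 2) (k : ℕ) : m 0 / 2 ≤ m k := by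
  linarith [(sub_sum_le_and_le_of_decay hm ha hb hab hc k).1, hc k]

lemma tsum_sub_succ_le_of_decay (hm : ∀ k, m (k + 1) = m k - a k * m k - b k)
    (ha : ∀ k, 0 ≤ a k) (hb : ∀ k, 0 ≤ b k) (hab : ∀ k, a k * m 0 + b k ≤ c k)
    (hc : ∀ n, ∑ k ∈ range n, c k ≤ m 0 / 2) : ∑' j, (m j - m (j + 1)) ≤ m 0 / 2 := by
  refine Real.tsum_le_of_sum_range_le (fun j => ?_) (fun n => ?_)
  · have hmj : 0 ≤ m j := by linarith [half_le_of_decay hm ha hb hab hc j, hc 0]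
    rw [hm j]
    linarith [mul_nonneg (ha j) hmj, hb j]
  · rw [sum_range_sub']
    linarith [half_le_of_decay hm ha hb hab hc n]

end Decay

lemma le_rpow_one_div_four_of_pow_le {x y : ℝ} (hx : 0 ≤ x) (hy : 0 ≤ y) (h : x ^ 4 ≤ y) :
    x ≤ y ^ ((1 : ℝ) / 4) := by
  rw [one_div, Real.le_rpow_inv_iff_of_pos hx hy (by norm_num)]
  exact_mod_cast h

lemma two_pow_mul_rpow_one_div_four_pow_le {L : ℕ → ℕ}
    (hL : ∀ k, L (k + 1) = ⌊(L k : ℝ) ^ ((3 : ℝ) / 2)⌋₊ + 1) (h16 : 16 ≤ L 0) (k : ℕ) :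
    2 ^ k * ((L 0 : ℝ) ^ ((1 : ℝ) / 4)) ^ 2 ≤ (L k : ℝ) ^ ((1 : ℝ) / 2) ∧
      2 ^ k * ((L 0 : ℝ) ^ ((1 : ℝ) / 4)) ^ 3 ≤ (L k : ℝ) ^ ((3 : ℝ) / 4) := by
  have hgrowth : (4 : ℝ) ^ k * L 0 ≤ L k := by exact_mod_cast four_pow_mul_le_of_floor_rpow hL h16 k
  simp only [← Real.rpow_mul_natCast (Nat.cast_nonneg _)]
  norm_num
  exact ⟨two_pow_mul_rpow_le_rpow k (by positivity) (by norm_num) hgrowth,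
    two_pow_mul_rpow_le_rpow k (by positivity) (by norm_num) hgrowth⟩

lemma div_mul_add_div_le_geometric {κ s u v : ℝ} (j : ℕ) (hκ : 0 ≤ κ) (hs : 0 < s)
    (hu : 2 ^ j * s ^ 2 ≤ u) (hv : 2 ^ j * s ^ 3 ≤ v) :
    κ / u * (1 / (3 * s)) + 3 / v ≤ (κ / 3 + 3) / s ^ 3 * (1 / 2) ^ j :=
  calc κ / u * (1 / (3 * s)) + 3 / v
      ≤ κ / (2 ^ j * s ^ 2) * (1 / (3 * s)) + 3 / (2 ^ j * s ^ 3) := by gcongr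
    _ = (κ / 3 + 3) / s ^ 3 * (1 / 2) ^ j := by rw [one_div_pow]; field_simp

lemma sum_geometric_le_half_initial {κ s : ℝ} (hκ : 0 ≤ κ) (hs : 4 * κ + 6 ≤ s) (n : ℕ) :
    ∑ k ∈ range n, (κ / 3 + 3) / s ^ 3 * (1 / 2) ^ k ≤ 1 / (3 * s) / 2 := by
  have hs0 : 0 < s := by linarith
  rw [← mul_sum]
  calc (κ / 3 + 3) / s ^ 3 * ∑ k ∈ range n, (1 / 2 : ℝ) ^ k ≤ (κ / 3 + 3) / s ^ 3 * 2 := by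
        gcongr; exact sum_geometric_two_le n
    _ ≤ 1 / (3 * s) / 2 := by
        rw [div_mul_eq_mul_div, div_div, div_le_div_iff₀ (by positivity) (by positivity)]
        nlinarith [mul_le_mul_of_nonneg_left hs (by positivity : (0 : ℝ) ≤ s ^ 2)]

lemma half_div_lt_half_initial {κ s u : ℝ} (hκ : 0 ≤ κ) (hs : 4 * κ + 6 ≤ s) (hu : s ^ 2 ≤ u) :
    κ / 2 / u < 1 / (3 * s) / 2 := by
  have hs0 : 0 < s := by linarith
  calc κ / 2 / u ≤ κ / 2 / s ^ 2 := by gcongr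
    _ < 1 / (3 * s) / 2 := by
        rw [div_div, div_div, div_lt_div_iff₀ (by positivity) (by positivity)]
        nlinarith

theorem stmt11_general (N K : ℕ) :
    ∃ L0star : ℕ, ∀ L0 : ℕ, L0star ≤ L0 →
      ∀ (L : ℕ → ℕ) (m : ℕ → ℝ),
        L 0 = L0 →
        (∀ k, L (k + 1) = ⌊(L k : ℝ) ^ ((3 : ℝ) / 2)⌋₊ + 1) →
        m 0 = 1 / (3 * (L0 : ℝ) ^ ((1 : ℝ) / 4)) →
        (∀ k, m (k + 1)
          = m k - ((96 * (N : ℝ) * K) / (L k : ℝ) ^ ((1 : ℝ) / 2)) * m k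
              - 3 / (L k : ℝ) ^ ((3 : ℝ) / 4)) →
        (∀ k, (48 * (N : ℝ) * K) / (L k : ℝ) ^ ((1 : ℝ) / 2) < m k) ∧
        (∑' j : ℕ, (m j - m (j + 1))) ≤ m 0 / 2 ∧
        (∀ k, m 0 / 2 ≤ m k) ∧ 0 < m 0 / 2 := by
  refine ⟨(384 * N * K + 6) ^ 4, fun L0 hL0 L m hL0eq hL hm0 hm => ?_⟩
  subst hL0eq
  set κ : ℝ := 96 * (N : ℝ) * K
  set s : ℝ := (L 0 : ℝ) ^ ((1 : ℝ) / 4)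
  have hκ : 0 ≤ κ := by positivity
  have hs : 4 * κ + 6 ≤ s := le_rpow_one_div_four_of_pow_le (by positivity) (by positivity) <|
    calc (4 * κ + 6) ^ 4 = (((384 * N * K + 6) ^ 4 : ℕ) : ℝ) := by push_cast [κ]; ring
      _ ≤ L 0 := by exact_mod_cast hL0
  have hs0 : 0 < s := by linarith
  have h16 : 16 ≤ L 0 := (Nat.pow_le_pow_left (by omega : 2 ≤ 384 * N * K + 6) 4).trans hL0
  have hscale := two_pow_mul_rpow_one_div_four_pow_le hL h16
  have ha (k : ℕ) : 0 ≤ κ / (L k : ℝ) ^ ((1 : ℝ) / 2) := by positivity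
  have hb (k : ℕ) : 0 ≤ 3 / (L k : ℝ) ^ ((3 : ℝ) / 4) := by positivity
  have hab (k : ℕ) := div_mul_add_div_le_geometric k hκ hs0 (hscale k).1 (hscale k).2
  have hc := sum_geometric_le_half_initial hκ hs
  rw [← hm0] at hab hc
  have hhalf := half_le_of_decay hm ha hb hab hc
  refine ⟨fun k => ?_, tsum_sub_succ_le_of_decay hm ha hb hab hc, hhalf, by rw [hm0]; positivity⟩
  have hsk : s ^ 2 ≤ (L k : ℝ) ^ ((1 : ℝ) / 2) :=
    (le_mul_of_one_le_left (by positivity) (one_le_pow₀ (by norm_num))).trans (hscale k).1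
  calc 48 * (N : ℝ) * K / (L k : ℝ) ^ ((1 : ℝ) / 2) = κ / 2 / (L k : ℝ) ^ ((1 : ℝ) / 2) := by ring
    _ < m 0 / 2 := hm0 ▸ half_div_lt_half_initial hκ hs hsk
    _ ≤ m k := hhalf k

/-- With `α = 3/2`, `β = 1/2`, length scales `L_{k+1} = ⌊L_k^α⌋ + 1`
and masses `m_{k+1} = m_k − (96NK/L_k^{α−1})·m_k − 3/L_k^{α(1−β)}`, initial mass
`m_0 = 1/(3 L_0^{(1−β)/2})`: for `L_0` large (depending on `N, K`):
(a) `m_k > 48NK/L_k^{1−β}` for all `k`;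
(b) the total decrement `S = Σ_j (m_j − m_{j+1})` satisfies `S ≤ m_0/2`;
consequently `m_k ≥ m_0/2 > 0` for all `k`.
(Here `α−1 = 1/2`, `α(1−β) = 3/4`, `(1−β)/2 = 1/4`, `1−β = 1/2`.) -/
theorem stmt11 (N K : ℕ) (hN : 1 ≤ N) (hK : 1 ≤ K) :
    ∃ L0star : ℕ, ∀ L0 : ℕ, L0star ≤ L0 →
      ∀ (L : ℕ → ℕ) (m : ℕ → ℝ),
        L 0 = L0 →
        (∀ k, L (k + 1) = ⌊(L k : ℝ) ^ ((3 : ℝ) / 2)⌋₊ + 1) →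
        m 0 = 1 / (3 * (L0 : ℝ) ^ ((1 : ℝ) / 4)) →
        (∀ k, m (k + 1)
          = m k - ((96 * (N : ℝ) * K) / (L k : ℝ) ^ ((1 : ℝ) / 2)) * m k
              - 3 / (L k : ℝ) ^ ((3 : ℝ) / 4)) →
        (∀ k, (48 * (N : ℝ) * K) / (L k : ℝ) ^ ((1 : ℝ) / 2) < m k) ∧
        (∑' j : ℕ, (m j - m (j + 1))) ≤ m 0 / 2 ∧
        (∀ k, m 0 / 2 ≤ m k) ∧ 0 < m 0 / 2 :=
  stmt11_general N K
end
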